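/- arXiv:1210.8424 — 8 statements merged into one kernel-verified Lean document; each statement's English description precedes it below -/
import Mathlib

section
/- If G is a simple digraph on n vertices with no directed cycles of length at most 2, then the number of induced 3-vertex directed paths in G is at most 2n^3/25. -/
/-- A digraph (given by its edge relation) is 2-free: no loops and no 2-cycles. -/
def TwoFree {V : Type*} (E : V → V → Prop) : Prop :=
  (∀ v, ¬ E v v) ∧ ∀ u v, ¬ (E u v ∧ E v u)

/-- `(u, w, v)` is an induced directed 3-vertex path. -/
def InducedP3 {V : Type*} (E : V → V → Prop) (u w v : V) : Prop :=
  u ≠ w ∧ w ≠ v ∧ u ≠ v ∧ E u w ∧ E w v ∧ ¬ E w u ∧ ¬ E v w ∧ ¬ E u v ∧ ¬ E v u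

instance {V : Type*} [DecidableEq V] (E : V → V → Prop) [DecidableRel E] (u w v : V) :
    Decidable (InducedP3 E u w v) := by unfold InducedP3; infer_instance

/-- The number of induced 3-vertex directed paths. -/
def p3Count (n : ℕ) (E : Fin n → Fin n → Prop) [DecidableRel E] : ℕ :=
  ((Finset.univ : Finset (Fin n × Fin n × Fin n)).filter
    (fun p => InducedP3 E p.1 p.2.1 p.2.2)).card

/-! For a vertex `w`, weight each vertex `x` by `a_w(x) = [x → w] - [w → x]` and by
`b_w(x) = [w → x] - 2 [x ≠ w, x and w nonadjacent]`. Then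
`∑_{w,x,y} (11 a_w(x) a_w(y) + b_w(x) b_w(y)) = ∑_w (11 (∑_x a_w(x))² + (∑_x b_w(x))²) ≥ 0`.
On the other hand, for every triple `(w, x, y)`, `50` times the number of its orderings that are
induced paths plus the sum of that term over its six orderings is at most `24`: a finite check
over the 2-free digraphs on at most three vertices, tight on the induced path. Summing over all
`n³` triples gives `300 P ≤ 24 n³`. -/

theorem TwoFree.trichotomy {V : Type*} {E : V → V → Prop} (h2 : TwoFree E) (a b : V) :
    (E a b ∧ ¬ E b a) ∨ (E b a ∧ ¬ E a b) ∨ (¬ E a b ∧ ¬ E b a) := by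
  by_cases hab : E a b
  · exact Or.inl ⟨hab, fun hba => h2.2 a b ⟨hab, hba⟩⟩
  · by_cases hba : E b a
    · exact Or.inr (Or.inl ⟨hba, hab⟩)
    · exact Or.inr (Or.inr ⟨hab, hba⟩)

open Finset

namespace Bondy

variable {V : Type*}

section Symmetrization

variable {R : Type*} [AddCommMonoid R]

def symm3 (f : V → V → V → R) (a b c : V) : R :=
  f a b c + f a c b + f b a c + f b c a + f c a b + f c b a

lemma symm3_swap₁₂ (f : V → V → V → R) (a b c : V) : symm3 f a b c = symm3 f b a c := by
  simp only [symm3]; abel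

lemma symm3_swap₂₃ (f : V → V → V → R) (a b c : V) : symm3 f a b c = symm3 f a c b := by
  simp only [symm3]; abel

variable [Fintype V]

lemma sum_symm3 (f : V → V → V → R) :
    ∑ a, ∑ b, ∑ c, symm3 f a b c = 6 • ∑ a, ∑ b, ∑ c, f a b c := by
  have swap₂₃ : ∀ g : V → V → V → R, ∑ a, ∑ b, ∑ c, g a c b = ∑ a, ∑ b, ∑ c, g a b c :=
    fun g => sum_congr rfl fun _ _ => sum_comm
  have swap₁₂ : ∀ g : V → V → V → R, ∑ a, ∑ b, ∑ c, g b a c = ∑ a, ∑ b, ∑ c, g a b c :=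
    fun g => sum_comm
  set S := ∑ a, ∑ b, ∑ c, f a b c
  have e₁ : ∑ a, ∑ b, ∑ c, f a c b = S := swap₂₃ f
  have e₂ : ∑ a, ∑ b, ∑ c, f b a c = S := swap₁₂ f
  have e₃ : ∑ a, ∑ b, ∑ c, f b c a = S := (swap₁₂ fun a b c => f a c b).trans e₁
  have e₄ : ∑ a, ∑ b, ∑ c, f c a b = S := (swap₂₃ fun a b c => f b a c).trans e₂
  have e₅ : ∑ a, ∑ b, ∑ c, f c b a = S := (swap₁₂ fun a b c => f c a b).trans e₄
  simp only [symm3, sum_add_distrib]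
  rw [e₁, e₂, e₃, e₄, e₅]
  abel

end Symmetrization

variable (E : V → V → Prop) [DecidableRel E]

def inOutWeight (w x : V) : ℤ :=
  (if E x w then 1 else 0) - (if E w x then 1 else 0)

def outNonWeight [DecidableEq V] (w x : V) : ℤ :=
  (if E w x then 1 else 0) - (if x ≠ w ∧ ¬ E x w ∧ ¬ E w x then 2 else 0)

def sosTerm [DecidableEq V] (w x y : V) : ℤ :=
  11 * (inOutWeight E w x * inOutWeight E w y) + outNonWeight E w x * outNonWeight E w y

def pathIndicator [DecidableEq V] (u w v : V) : ℤ :=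
  if InducedP3 E u w v then 1 else 0

variable [DecidableEq V]

lemma sum_sosTerm_eq [Fintype V] (w : V) :
    ∑ x, ∑ y, sosTerm E w x y =
      11 * (∑ x, inOutWeight E w x) ^ 2 + (∑ x, outNonWeight E w x) ^ 2 := by
  simp only [sosTerm, sum_add_distrib, ← mul_sum, ← sum_mul, sq]

lemma sum_sosTerm_nonneg [Fintype V] : 0 ≤ ∑ w, ∑ x, ∑ y, sosTerm E w x y :=
  sum_nonneg fun w _ => by rw [sum_sosTerm_eq]; positivity

variable {E}

lemma sosTerm_self_left (h2 : TwoFree E) (w y : V) : sosTerm E w w y = 0 := by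
  simp [sosTerm, inOutWeight, outNonWeight, h2.1 w]

lemma sosTerm_self_right (h2 : TwoFree E) (w x : V) : sosTerm E w x w = 0 := by
  simp [sosTerm, inOutWeight, outNonWeight, h2.1 w]

lemma sosTerm_diag_le (h2 : TwoFree E) (w x : V) : sosTerm E w x x ≤ 12 := by
  by_cases hxw : E x w
  · have hwx : ¬ E w x := fun hwx => h2.2 x w ⟨hxw, hwx⟩
    simp [sosTerm, inOutWeight, outNonWeight, hxw, hwx]
  by_cases hwx : E w x
  · simp [sosTerm, inOutWeight, outNonWeight, hxw, hwx]
  by_cases hx : x = w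
  · simp [sosTerm, inOutWeight, outNonWeight, hx, h2.1 w]
  · simp [sosTerm, inOutWeight, outNonWeight, hxw, hwx, hx]

lemma symm3_le_of_eq (h2 : TwoFree E) (w x : V) :
    50 * symm3 (pathIndicator E) w x x + symm3 (sosTerm E) w x x ≤ 24 := by
  have h := sosTerm_diag_le h2 w x
  simp only [symm3, sosTerm_self_left h2, sosTerm_self_right h2]
  simp [pathIndicator, InducedP3]
  omega

lemma symm3_le_of_ne (h2 : TwoFree E) {w x y : V} (hwx : w ≠ x) (hwy : w ≠ y) (hxy : x ≠ y) :
    50 * symm3 (pathIndicator E) w x y + symm3 (sosTerm E) w x y ≤ 24 := by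
  rcases h2.trichotomy x w with ⟨a1, a2⟩ | ⟨a1, a2⟩ | ⟨a1, a2⟩ <;>
    rcases h2.trichotomy w y with ⟨b1, b2⟩ | ⟨b1, b2⟩ | ⟨b1, b2⟩ <;>
      rcases h2.trichotomy x y with ⟨c1, c2⟩ | ⟨c1, c2⟩ | ⟨c1, c2⟩ <;>
        simp [symm3, pathIndicator, sosTerm, inOutWeight, outNonWeight, InducedP3,
          a1, a2, b1, b2, c1, c2, hwx, hwy, hxy, hwx.symm, hwy.symm, hxy.symm]

lemma symm3_le (h2 : TwoFree E) (w x y : V) :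
    50 * symm3 (pathIndicator E) w x y + symm3 (sosTerm E) w x y ≤ 24 := by
  by_cases hxy : x = y
  · subst hxy; exact symm3_le_of_eq h2 w x
  by_cases hwx : w = x
  · subst hwx
    rw [symm3_swap₂₃, symm3_swap₁₂, symm3_swap₂₃ (sosTerm E), symm3_swap₁₂ (sosTerm E)]
    exact symm3_le_of_eq h2 y w
  by_cases hwy : w = y
  · subst hwy
    rw [symm3_swap₁₂, symm3_swap₁₂ (sosTerm E)]
    exact symm3_le_of_eq h2 x w
  exact symm3_le_of_ne h2 hwx hwy hxy

lemma fifty_mul_sum_pathIndicator_le [Fintype V] (h2 : TwoFree E) :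
    50 * ∑ u, ∑ w, ∑ v, pathIndicator E u w v ≤ 4 * (Fintype.card V : ℤ) ^ 3 := by
  have hsum : ∑ w, ∑ x, ∑ y, (50 * symm3 (pathIndicator E) w x y + symm3 (sosTerm E) w x y)
      ≤ ∑ _w : V, ∑ _x : V, ∑ _y : V, (24 : ℤ) :=
    sum_le_sum fun w _ => sum_le_sum fun x _ => sum_le_sum fun y _ => symm3_le h2 w x y
  simp only [sum_add_distrib, ← mul_sum, sum_symm3, sum_const, card_univ, nsmul_eq_mul,
    Nat.cast_ofNat] at hsum
  linarith [sum_sosTerm_nonneg E]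

end Bondy

lemma p3Count_eq_sum (n : ℕ) (E : Fin n → Fin n → Prop) [DecidableRel E] :
    (p3Count n E : ℤ) = ∑ u, ∑ w, ∑ v, Bondy.pathIndicator E u w v := by
  simp only [p3Count, card_filter, Fintype.sum_prod_type, Bondy.pathIndicator]
  push_cast
  rfl

theorem bondy_bound (n : ℕ) (E : Fin n → Fin n → Prop) [DecidableRel E]
    (h2 : TwoFree E) :
    (p3Count n E : ℝ) ≤ 2 * (n : ℝ) ^ 3 / 25 := by
  have h : 50 * (p3Count n E : ℤ) ≤ 4 * (n : ℤ) ^ 3 := by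
    simpa only [p3Count_eq_sum, Fintype.card_fin] using Bondy.fifty_mul_sum_pathIndicator_le h2
  have h' : 50 * (p3Count n E : ℝ) ≤ 4 * (n : ℝ) ^ 3 := by exact_mod_cast h
  linarith
end

section
/- Let n ≥ 4 and let β be an integer with −2 ≤ 8β − 3n ≤ 2. Suppose X and Y are finite sets with |X| + |Y| = n, and t is a nonnegative integer with t ≤ 2|X| and t ≤ 2|Y|. Then |X|·(8β − 3n) + t + n·(n − 2β − 1)·(2β − n/2 + 1) ≤ n^3/16. -/
/-!
Put `d = 8b - 3n`. The cubic term factors as `n (n - (d + 4)) (n + (d + 4)) / 16`, so the claim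
becomes `|X| d + t ≤ n (d + 4)² / 16`. Since `|d| ≤ 2`, the weights `(2 - d) / 4` and `(2 + d) / 4`
form a convex combination, and averaging `t ≤ 2|X|` and `t ≤ 2|Y|` with them gives
`|X| d + t ≤ n (1 + d / 2)`, which is `n (d + 4)² / 16` minus the nonnegative term `n d² / 16`.
-/

section OrderedField

variable {K : Type*} [Field K] [LinearOrder K] [IsStrictOrderedRing K]

theorem mul_mul_eq_cube_div_sixteen_sub (n b : K) :
    n * (n - 2 * b - 1) * (2 * b - n / 2 + 1) = n ^ 3 / 16 - n * (8 * b - 3 * n + 4) ^ 2 / 16 := by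
  ring

theorem mul_add_le_of_le_two_mul {a c d t : K} (hd1 : -2 ≤ d) (hd2 : d ≤ 2)
    (hta : t ≤ 2 * a) (htc : t ≤ 2 * c) : a * d + t ≤ (a + c) * (1 + d / 2) := by
  have hweighted : 0 ≤ (2 - d) * (2 * a - t) + (2 + d) * (2 * c - t) := by
    have := mul_nonneg (sub_nonneg.2 hd2) (sub_nonneg.2 hta)
    have := mul_nonneg (neg_le_iff_add_nonneg'.1 hd1) (sub_nonneg.2 htc)
    linarith
  linarith

theorem mul_add_le_mul_add_four_sq {a c d t : K} (ha : 0 ≤ a) (hc : 0 ≤ c)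
    (hd1 : -2 ≤ d) (hd2 : d ≤ 2) (hta : t ≤ 2 * a) (htc : t ≤ 2 * c) :
    a * d + t ≤ (a + c) * (d + 4) ^ 2 / 16 := by
  have hsq : 0 ≤ (a + c) * d ^ 2 := mul_nonneg (add_nonneg ha hc) (sq_nonneg d)
  nlinarith [mul_add_le_of_le_two_mul hd1 hd2 hta htc]

end OrderedField

theorem key_numerical_inequality_general {α β' : Type*} (n b : ℤ)
    (hb1 : -2 ≤ 8 * b - 3 * n) (hb2 : 8 * b - 3 * n ≤ 2)
    (X : Finset α) (Y : Finset β') (hcard : (X.card : ℤ) + (Y.card : ℤ) = n)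
    (t : ℕ) (ht1 : (t : ℤ) ≤ 2 * X.card) (ht2 : (t : ℤ) ≤ 2 * Y.card) :
    (X.card : ℚ) * (8 * (b : ℚ) - 3 * (n : ℚ)) + (t : ℚ)
      + (n : ℚ) * ((n : ℚ) - 2 * b - 1) * (2 * (b : ℚ) - (n : ℚ) / 2 + 1)
      ≤ (n : ℚ) ^ 3 / 16 := by
  have hn : (n : ℚ) = X.card + Y.card := by exact_mod_cast hcard.symm
  have hbound := mul_add_le_mul_add_four_sq (d := 8 * (b : ℚ) - 3 * n) (t := (t : ℚ))
    (Nat.cast_nonneg X.card) (Nat.cast_nonneg Y.card)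
    (by exact_mod_cast hb1) (by exact_mod_cast hb2) (by exact_mod_cast ht1) (by exact_mod_cast ht2)
  rw [← hn] at hbound
  rw [mul_mul_eq_cube_div_sixteen_sub]
  linarith

theorem key_numerical_inequality {α β' : Type*} (n b : ℤ) (hn : 4 ≤ n)
    (hb1 : -2 ≤ 8 * b - 3 * n) (hb2 : 8 * b - 3 * n ≤ 2)
    (X : Finset α) (Y : Finset β') (hcard : (X.card : ℤ) + (Y.card : ℤ) = n)
    (t : ℕ) (ht1 : (t : ℤ) ≤ 2 * X.card) (ht2 : (t : ℤ) ≤ 2 * Y.card) :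
    (X.card : ℚ) * (8 * (b : ℚ) - 3 * (n : ℚ)) + (t : ℚ)
      + (n : ℚ) * ((n : ℚ) - 2 * b - 1) * (2 * (b : ℚ) - (n : ℚ) / 2 + 1)
      ≤ (n : ℚ) ^ 3 / 16 :=
  key_numerical_inequality_general n b hb1 hb2 X Y hcard t ht1 ht2
end

section
/- Let n ≥ 4, and let δ be an integer with −2 ≤ δ ≤ 2. Suppose x, y, t are nonnegative integers with x + y = n, t ≤ 2x, and t ≤ 2y. Then 16·(x·δ + t) ≤ n·(δ + 4)^2. -/
theorem add_mul_le_of_le_of_le {R : Type*} [Semiring R] [PartialOrder R] [IsOrderedRing R]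
    {a b t u v : R} (ha : 0 ≤ a) (hb : 0 ≤ b) (hu : t ≤ u) (hv : t ≤ v) :
    (a + b) * t ≤ a * u + b * v := by
  rw [add_mul]
  exact add_le_add (mul_le_mul_of_nonneg_left hu ha) (mul_le_mul_of_nonneg_left hv hb)

/-- Writing `s = (δ + 4) ^ 2`, the bound `16 t ≤ (32 - s) x + s y` (a convex combination of
`t ≤ 2x` and `t ≤ 2y`) reduces the claim to `0 ≤ 2 x δ ^ 2`; when `s > 32`, `t ≤ 2y` alone suffices
since `s - 16 δ = (δ - 4) ^ 2`. -/
theorem sixteen_mul_add_le_add_mul_add_four_sq {R : Type*} [CommRing R] [LinearOrder R]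
    [IsStrictOrderedRing R] {x y t : R} (δ : R) (hx : 0 ≤ x) (hy : 0 ≤ y)
    (htx : t ≤ 2 * x) (hty : t ≤ 2 * y) :
    16 * (x * δ + t) ≤ (x + y) * (δ + 4) ^ 2 := by
  rcases le_total ((δ + 4) ^ 2) 32 with hs | hs
  · have hcomb := add_mul_le_of_le_of_le (sub_nonneg.2 hs) (sq_nonneg (δ + 4)) htx hty
    nlinarith [mul_nonneg hx (sq_nonneg δ)]
  · nlinarith [mul_nonneg hx (sq_nonneg (δ - 4)), mul_nonneg hy (sub_nonneg.2 hs)]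

theorem simplified_integer_inequality_general (n x y t : ℕ) (δ : ℤ)
    (hxy : x + y = n) (ht1 : t ≤ 2 * x) (ht2 : t ≤ 2 * y) :
    16 * ((x : ℤ) * δ + (t : ℤ)) ≤ (n : ℤ) * (δ + 4) ^ 2 := by
  rw [← hxy, Nat.cast_add]
  exact sixteen_mul_add_le_add_mul_add_four_sq δ (Nat.cast_nonneg x) (Nat.cast_nonneg y)
    (by exact_mod_cast ht1) (by exact_mod_cast ht2)

theorem simplified_integer_inequality (n x y t : ℕ) (δ : ℤ)
    (hn : 4 ≤ n) (hδ1 : -2 ≤ δ) (hδ2 : δ ≤ 2)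
    (hxy : x + y = n) (ht1 : t ≤ 2 * x) (ht2 : t ≤ 2 * y) :
    16 * ((x : ℤ) * δ + (t : ℤ)) ≤ (n : ℤ) * (δ + 4) ^ 2 :=
  simplified_integer_inequality_general n x y t δ hxy ht1 ht2
end

section
/- In the circular interval digraph G_β on n vertices with n/2 > β ≥ 0, the number of induced 3-vertex directed paths equals n·(n − 2β − 1)·(2β − n/2 + 1) when 3β ≥ n − 2 (i.e., when this quantity is the correct count), where an induced 3-vertex path (u,w,v) requires uw, wv edges and u,v nonadjacent. -/
/-- The clockwise circular distance from `u` to `v` on `Fin n`. -/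
def cdist (n : ℕ) (u v : Fin n) : ℕ := ((v : ℕ) + n - (u : ℕ)) % n

/-- The circular interval digraph `G_β`: an edge from `u` to `v` iff `1 ≤ d(u,v) ≤ β`. -/
def gbeta (n β : ℕ) (u v : Fin n) : Prop := 1 ≤ cdist n u v ∧ cdist n u v ≤ β

instance (n β : ℕ) : DecidableRel (gbeta n β) := fun u v => by
  unfold gbeta; infer_instance

open Finset
open scoped Fin.NatCast Fin.CommRing

section Cdist

lemma cdist_eq_val_sub {n : ℕ} (u v : Fin n) : cdist n u v = ((v - u : Fin n) : ℕ) := by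
  have hu := u.isLt
  simp only [cdist, Fin.sub_def]
  congr 1
  omega

variable {n : ℕ} [NeZero n]

lemma natCast_cdist (u v : Fin n) : ((cdist n u v : ℕ) : Fin n) = v - u := by
  rw [cdist_eq_val_sub, Fin.cast_val_eq_self]

lemma cdist_self (u : Fin n) : cdist n u u = 0 := by
  simp [cdist_eq_val_sub]

lemma cdist_add_cdist_swap {u v : Fin n} (h : u ≠ v) : cdist n u v + cdist n v u = n := by
  have hpos : ((v - u : Fin n) : ℕ) ≠ 0 := by
    rw [Ne, Fin.val_eq_zero_iff, sub_eq_zero]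
    exact h.symm
  have hsum := congrArg Fin.val (show (v - u) + (u - v) = 0 by ring)
  rw [Fin.val_add_eq_ite, Fin.val_zero] at hsum
  rw [cdist_eq_val_sub, cdist_eq_val_sub]
  split_ifs at hsum <;> omega

lemma cdist_eq_add_of_lt (u w v : Fin n) (h : cdist n u w + cdist n w v < n) :
    cdist n u v = cdist n u w + cdist n w v := by
  rw [cdist_eq_val_sub, cdist_eq_val_sub, cdist_eq_val_sub] at *
  rw [show v - u = (w - u) + (v - w) by ring, Fin.val_add, Nat.mod_eq_of_lt h]

lemma cdist_sub_natCast_self (w : Fin n) {a : ℕ} (ha : a < n) : cdist n (w - a) w = a := by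
  rw [cdist_eq_val_sub, sub_sub_cancel, Fin.val_natCast, Nat.mod_eq_of_lt ha]

lemma cdist_self_add_natCast (w : Fin n) {b : ℕ} (hb : b < n) : cdist n w (w + b) = b := by
  rw [cdist_eq_val_sub, add_sub_cancel_left, Fin.val_natCast, Nat.mod_eq_of_lt hb]

end Cdist

/-- The arc lengths `(d(u, w), d(w, v))` of the induced paths `(u, w, v)` of `G_β` on `n` vertices. -/
def p3Offsets (n β : ℕ) : Finset (ℕ × ℕ) :=
  {p ∈ Icc 1 β ×ˢ Icc 1 β | β < p.1 + p.2 ∧ p.1 + p.2 + β < n}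

lemma lt_of_mem_p3Offsets {n β : ℕ} {p : ℕ × ℕ} (hp : p ∈ p3Offsets n β) : p.1 < n ∧ p.2 < n := by
  simp only [p3Offsets, mem_filter, mem_product, mem_Icc] at hp
  omega

section Gbeta

variable {n β : ℕ} [NeZero n]

lemma inducedP3_gbeta_iff (hβ : 2 * β < n) {u w v : Fin n} :
    InducedP3 (gbeta n β) u w v ↔ (cdist n u w, cdist n w v) ∈ p3Offsets n β := by
  simp only [InducedP3, gbeta, p3Offsets, mem_filter, mem_product, mem_Icc]
  constructor
  · rintro ⟨-, -, huv, ⟨ha, ha'⟩, ⟨hb, hb'⟩, -, -, hnuv, hnvu⟩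
    have := cdist_eq_add_of_lt u w v (by omega)
    have := cdist_add_cdist_swap huv
    omega
  · rintro ⟨⟨⟨ha, ha'⟩, hb, hb'⟩, hlo, hhi⟩
    have hsum := cdist_eq_add_of_lt u w v (by omega)
    have huw : u ≠ w := by rintro rfl; simp [cdist_self] at ha
    have hwv : w ≠ v := by rintro rfl; simp [cdist_self] at hb
    have huv : u ≠ v := by rintro rfl; simp [cdist_self] at hsum; omega
    have := cdist_add_cdist_swap huw
    have := cdist_add_cdist_swap hwv
    have := cdist_add_cdist_swap huv
    refine ⟨huw, hwv, huv, ?_⟩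
    omega

lemma card_inducedP3_gbeta (hβ : 2 * β < n) :
    #{p : Fin n × Fin n × Fin n | InducedP3 (gbeta n β) p.1 p.2.1 p.2.2}
      = n * #(p3Offsets n β) := by
  calc _ = #((univ : Finset (Fin n)) ×ˢ p3Offsets n β) := by
        refine card_nbij' (fun p => (p.2.1, cdist n p.1 p.2.1, cdist n p.2.1 p.2.2))
          (fun q => (q.1 - q.2.1, q.1, q.1 + q.2.2)) ?_ ?_ ?_ ?_
        · rintro ⟨u, w, v⟩ hp
          simpa [inducedP3_gbeta_iff hβ] using hp
        · rintro ⟨w, a, b⟩ hq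
          replace hq := (mem_product.1 (mem_coe.1 hq)).2
          obtain ⟨ha, hb⟩ := lt_of_mem_p3Offsets hq
          simpa [inducedP3_gbeta_iff hβ, cdist_sub_natCast_self w ha,
            cdist_self_add_natCast w hb] using hq
        · rintro ⟨u, w, v⟩ -
          simp [natCast_cdist]
        · rintro ⟨w, a, b⟩ hq
          replace hq := (mem_product.1 (mem_coe.1 hq)).2
          obtain ⟨ha, hb⟩ := lt_of_mem_p3Offsets hq
          simp [cdist_sub_natCast_self w ha, cdist_self_add_natCast w hb]
    _ = n * #(p3Offsets n β) := by rw [card_product, card_univ, Fintype.card_fin]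

end Gbeta

lemma card_filter_Icc_product_add_eq (β : ℕ) {s : ℕ} (hs : β < s) :
    #{p ∈ Icc 1 β ×ˢ Icc 1 β | p.1 + p.2 = s} = 2 * β + 1 - s := by
  calc _ = #(Icc (s - β) β) := by
        refine card_nbij' Prod.fst (fun a => (a, s - a)) ?_ ?_ ?_ ?_
        · rintro ⟨a, b⟩ hp
          simp only [coe_filter, mem_product, mem_Icc, Set.mem_ofPred_eq, mem_coe] at hp ⊢
          omega
        · intro a ha
          simp only [coe_Icc, Set.mem_Icc, coe_filter, mem_product, mem_Icc,
            Set.mem_ofPred_eq] at ha ⊢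
          omega
        · rintro ⟨a, b⟩ hp
          simp only [coe_filter, mem_product, mem_Icc, Set.mem_ofPred_eq] at hp
          simp only [Prod.mk.injEq, true_and]
          omega
        · intro a _
          rfl
    _ = 2 * β + 1 - s := by rw [Nat.card_Icc]; omega

lemma two_mul_card_p3Offsets_add_sq (β : ℕ) {m : ℕ} (hm : m ≤ β + 1) :
    2 * #(p3Offsets (2 * β + 1 + m) β) + m * m = m * (2 * β + 1) := by
  induction m with
  | zero =>
    suffices p3Offsets (2 * β + 1) β = ∅ by simp [this]
    exact filter_eq_empty_iff.2 fun p _ => by omega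
  | succ m ih =>
    have hsplit : p3Offsets (2 * β + 1 + (m + 1)) β
        = p3Offsets (2 * β + 1 + m) β ∪ {p ∈ Icc 1 β ×ˢ Icc 1 β | p.1 + p.2 = β + m + 1} := by
      rw [p3Offsets, p3Offsets, ← filter_or]
      exact filter_congr fun p _ => by omega
    have hdisj : Disjoint (p3Offsets (2 * β + 1 + m) β)
        {p ∈ Icc 1 β ×ˢ Icc 1 β | p.1 + p.2 = β + m + 1} :=
      disjoint_filter.2 fun p _ hp => by omega
    rw [hsplit, card_union_of_disjoint hdisj, card_filter_Icc_product_add_eq β (by omega),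
      show 2 * β + 1 - (β + m + 1) = β - m by omega]
    have := ih (by omega)
    zify [show m ≤ β by omega] at this ⊢
    linear_combination this

theorem gbeta_p3_count (n β : ℕ) (h1 : 2 * β < n) (h2 : n ≤ 3 * β + 2) :
    ((((Finset.univ : Finset (Fin n × Fin n × Fin n)).filter
        (fun p => InducedP3 (gbeta n β) p.1 p.2.1 p.2.2)).card : ℚ)
      = (n : ℚ) * ((n : ℚ) - 2 * (β : ℚ) - 1) * (2 * (β : ℚ) - (n : ℚ) / 2 + 1)) := by
  obtain ⟨m, rfl⟩ : ∃ m, n = 2 * β + 1 + m := ⟨n - (2 * β + 1), by omega⟩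
  have : NeZero (2 * β + 1 + m) := ⟨by omega⟩
  have hoffsets : (2 * #(p3Offsets (2 * β + 1 + m) β) + m * m : ℚ) = m * (2 * β + 1) := by
    exact_mod_cast two_mul_card_p3Offsets_add_sq β (by omega : m ≤ β + 1)
  rw [card_inducedP3_gbeta h1]
  push_cast
  linear_combination ((2 * β + 1 + m : ℚ) / 2) * hoffsets
end

section
/- If G is a 3-free digraph on n vertices, then S ≤ (3n/2)·T, where S is 24 times the number of directed 4-cycles of G and T is the number of induced 3-vertex directed paths of G. -/
/-- A digraph is 3-free: no directed cycles of length 1, 2 or 3. -/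
def ThreeFree {V : Type*} (E : V → V → Prop) : Prop :=
  (∀ v, ¬ E v v) ∧ (∀ u v, ¬ (E u v ∧ E v u)) ∧
    ∀ u v w, ¬ (E u v ∧ E v w ∧ E w u)

/-- `w, x, y, z` form a directed 4-vertex path. -/
def IsPath4 {V : Type*} (E : V → V → Prop) (w x y z : V) : Prop :=
  w ≠ x ∧ w ≠ y ∧ w ≠ z ∧ x ≠ y ∧ x ≠ z ∧ y ≠ z ∧ E w x ∧ E x y ∧ E y z

instance {V : Type*} [DecidableEq V] (E : V → V → Prop) [DecidableRel E] (w x y z : V) :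
    Decidable (IsPath4 E w x y z) := by unfold IsPath4; infer_instance

/-- `w → x → y → z → w` is a directed 4-cycle. -/
def IsCycle4 {V : Type*} (E : V → V → Prop) (w x y z : V) : Prop :=
  w ≠ x ∧ w ≠ y ∧ w ≠ z ∧ x ≠ y ∧ x ≠ z ∧ y ≠ z ∧ E w x ∧ E x y ∧ E y z ∧ E z w

instance {V : Type*} [DecidableEq V] (E : V → V → Prop) [DecidableRel E] (w x y z : V) :
    Decidable (IsCycle4 E w x y z) := by unfold IsCycle4; infer_instance

/-- The number of directed 4-vertex paths. -/
def p4Count (n : ℕ) (E : Fin n → Fin n → Prop) [DecidableRel E] : ℕ :=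
  ((Finset.univ : Finset (Fin n × Fin n × Fin n × Fin n)).filter
    (fun p => IsPath4 E p.1 p.2.1 p.2.2.1 p.2.2.2)).card

/-- `S`: the number of ordered 4-tuples of distinct vertices whose vertex set carries a
directed 4-cycle; equal to 24 times the number of directed 4-cycles of `G`. -/
def sCount (n : ℕ) (E : Fin n → Fin n → Prop) [DecidableRel E] : ℕ :=
  ((Finset.univ : Finset (Fin n × Fin n × Fin n × Fin n)).filter
    (fun p => p.1 ≠ p.2.1 ∧ p.1 ≠ p.2.2.1 ∧ p.1 ≠ p.2.2.2 ∧ p.2.1 ≠ p.2.2.1 ∧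
      p.2.1 ≠ p.2.2.2 ∧ p.2.2.1 ≠ p.2.2.2 ∧
      ∃ w x y z : Fin n, IsCycle4 E w x y z ∧
        ({w, x, y, z} : Finset (Fin n)) = {p.1, p.2.1, p.2.2.1, p.2.2.2})).card

/-- `|N|`: the number of ordered 4-tuples of vertices (repetitions allowed) whose vertex
set is not the vertex set of any directed 4-vertex path. -/
def nCount (n : ℕ) (E : Fin n → Fin n → Prop) [DecidableRel E] : ℕ :=
  ((Finset.univ : Finset (Fin n × Fin n × Fin n × Fin n)).filter
    (fun p => ¬ ∃ w x y z : Fin n, IsPath4 E w x y z ∧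
        ({w, x, y, z} : Finset (Fin n)) = {p.1, p.2.1, p.2.2.1, p.2.2.2})).card

/-!
Let `Q` be the set of closed walks `a → b → c → d → a`. A directed 4-cycle read from a
prescribed first vertex is such a walk, and the other three vertices can be listed in `3! = 6`
orders, so `S ≤ 6 |Q|`.

Write `M(u, v)` for the set of midpoints of 2-paths `u → w → v`. For a walk in `Q` the four
"diagonal" sets `M(a, c)`, `M(b, d)`, `M(c, a)`, `M(d, b)` are nonempty and, as the digraph is
3-free, pairwise disjoint; by Cauchy–Schwarz `16 ≤ n ∑ 1 / |M|`. Since `Q` is invariant under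
rotation, summing over `Q` gives `4 |Q| ≤ n ∑_{q ∈ Q} 1 / |M(a, c)|`. There are
`|M(a, c)| |M(c, a)|` walks with given `a, c`, so the last sum is `∑ |M(c, a)|` over the pairs for
which both sets are nonempty. Such `a, c` are distinct and nonadjacent, so it counts induced
paths `c → d → a` and is at most `T`.
-/

open Finset

lemma sq_card_le_sum_mul_sum_inv {ι K : Type*} [Field K] [LinearOrder K] [IsStrictOrderedRing K]
    (s : Finset ι) {g : ι → K} (hg : ∀ i ∈ s, 0 < g i) :
    (#s : K) ^ 2 ≤ (∑ i ∈ s, g i) * ∑ i ∈ s, (g i)⁻¹ := by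
  rcases s.eq_empty_or_nonempty with rfl | hs
  · simp
  have titu := sq_sum_div_le_sum_sq_div s (fun _ => (1 : K)) hg
  simp only [sum_const, nsmul_eq_mul, mul_one, one_pow, one_div] at titu
  rwa [div_le_iff₀ (sum_pos hg hs), mul_comm] at titu

def rotate4 {V : Type*} (q : V × V × V × V) : V × V × V × V := (q.2.1, q.2.2.1, q.2.2.2, q.1)

section ClosedWalks

variable {V : Type*} [Fintype V] (E : V → V → Prop) [DecidableRel E]

def midpoints (u v : V) : Finset V := {w | E u w ∧ E w v}

def closedWalks4 : Finset (V × V × V × V) :=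
  {q | E q.1 q.2.1 ∧ E q.2.1 q.2.2.1 ∧ E q.2.2.1 q.2.2.2 ∧ E q.2.2.2 q.1}

/-- For the walk `a → b → c → d → a` these are the midpoints `M(a, c)`; the iterates of `rotate4`
give the other diagonals `M(b, d)`, `M(c, a)`, `M(d, b)`. -/
def diagonalMidpoints (q : V × V × V × V) : Finset V := midpoints E q.1 q.2.2.1

variable {E}

@[simp]
lemma mem_midpoints {u v w : V} : w ∈ midpoints E u v ↔ E u w ∧ E w v := by
  simp [midpoints]

@[simp]
lemma mk_mem_closedWalks4 {a b c d : V} :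
    (a, b, c, d) ∈ closedWalks4 E ↔ E a b ∧ E b c ∧ E c d ∧ E d a := by
  simp [closedWalks4]

lemma card_diagonalMidpoints_pos {q : V × V × V × V} (hq : q ∈ closedWalks4 E) :
    0 < #(diagonalMidpoints E q) := by
  obtain ⟨a, b, c, d⟩ := q
  obtain ⟨hab, hbc, -, -⟩ := mk_mem_closedWalks4.mp hq
  exact card_pos.mpr ⟨b, mem_midpoints.mpr ⟨hab, hbc⟩⟩

lemma rotate4_mem_closedWalks4 {q : V × V × V × V} (hq : q ∈ closedWalks4 E) :
    rotate4 q ∈ closedWalks4 E := by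
  obtain ⟨a, b, c, d⟩ := q
  simp only [mk_mem_closedWalks4, rotate4] at hq ⊢
  tauto

lemma iterate_rotate4_mem_closedWalks4 {q : V × V × V × V} (hq : q ∈ closedWalks4 E) (k : ℕ) :
    rotate4^[k] q ∈ closedWalks4 E :=
  Function.Iterate.rec (· ∈ closedWalks4 E) hq (fun _ => rotate4_mem_closedWalks4) k

lemma sum_closedWalks4_comp_rotate4 {M : Type*} [AddCommMonoid M] (f : V × V × V × V → M) :
    ∑ q ∈ closedWalks4 E, f (rotate4 q) = ∑ q ∈ closedWalks4 E, f q :=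
  sum_nbij' rotate4 rotate4^[3] (fun _ => rotate4_mem_closedWalks4)
    (fun _ hq => iterate_rotate4_mem_closedWalks4 hq 3) (fun _ _ => rfl) (fun _ _ => rfl)
    (fun _ _ => rfl)

lemma sum_closedWalks4_comp_iterate_rotate4 {M : Type*} [AddCommMonoid M]
    (f : V × V × V × V → M) (k : ℕ) :
    ∑ q ∈ closedWalks4 E, f (rotate4^[k] q) = ∑ q ∈ closedWalks4 E, f q := by
  induction k with
  | zero => rfl
  | succ k ih =>
    simp only [Function.iterate_succ_apply]
    rw [sum_closedWalks4_comp_rotate4 (fun q => f (rotate4^[k] q)), ih]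

lemma sum_closedWalks4_eq_sum_card_mul_card {M : Type*} [AddCommMonoid M] (g : V → V → M) :
    ∑ q ∈ closedWalks4 E, g q.1 q.2.2.1 =
      ∑ a, ∑ c, (#(midpoints E a c) * #(midpoints E c a)) • g a c := by
  simp only [closedWalks4, sum_filter, Fintype.sum_prod_type]
  refine sum_congr rfl fun a _ => ?_
  rw [sum_comm]
  refine sum_congr rfl fun c _ => ?_
  simp only [midpoints, card_filter, sum_mul_sum, sum_smul, ite_mul, one_mul, zero_mul, ite_smul,
    one_smul, zero_smul, ← ite_and, and_assoc]

end ClosedWalks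

namespace ThreeFree

variable {V : Type*} {E : V → V → Prop}

lemma inducedP3_iff (h3 : ThreeFree E) {u w v : V} :
    InducedP3 E u w v ↔ (u ≠ v ∧ ¬E u v ∧ ¬E v u) ∧ E u w ∧ E w v := by
  obtain ⟨hloop, h2, -⟩ := h3
  constructor
  · rintro ⟨-, -, huv, huw, hwv, -, -, hnuv, hnvu⟩
    exact ⟨⟨huv, hnuv, hnvu⟩, huw, hwv⟩
  · rintro ⟨⟨huv, hnuv, hnvu⟩, huw, hwv⟩
    exact ⟨fun h => hloop u (h ▸ huw), fun h => hloop w (h ▸ hwv), huv, huw, hwv,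
      fun h => h2 u w ⟨huw, h⟩, fun h => h2 w v ⟨hwv, h⟩, hnuv, hnvu⟩

variable [Fintype V] [DecidableRel E]

lemma disjoint_midpoints_swap (h3 : ThreeFree E) (u v : V) :
    Disjoint (midpoints E u v) (midpoints E v u) :=
  disjoint_left.mpr fun w hw hw' =>
    h3.2.1 w v ⟨(mem_midpoints.mp hw).2, (mem_midpoints.mp hw').1⟩

lemma disjoint_midpoints_of_adj (h3 : ThreeFree E) {u v x y : V} (hyu : E y u) :
    Disjoint (midpoints E u v) (midpoints E x y) :=
  disjoint_left.mpr fun w hw hw' =>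
    h3.2.2 w y u ⟨(mem_midpoints.mp hw').2, hyu, (mem_midpoints.mp hw).1⟩

lemma nonadj_of_midpoints_nonempty (h3 : ThreeFree E) {u v : V}
    (huv : (midpoints E u v).Nonempty) (hvu : (midpoints E v u).Nonempty) :
    u ≠ v ∧ ¬E u v ∧ ¬E v u := by
  obtain ⟨w, hw⟩ := huv
  obtain ⟨z, hz⟩ := hvu
  rw [mem_midpoints] at hw hz
  exact ⟨fun h => h3.2.1 u w ⟨hw.1, h ▸ hw.2⟩, fun h => h3.2.2 u v z ⟨h, hz⟩,
    fun h => h3.2.2 v u w ⟨h, hw⟩⟩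

lemma sum_card_diagonalMidpoints_le (h3 : ThreeFree E) {q : V × V × V × V}
    (hq : q ∈ closedWalks4 E) :
    ∑ k ∈ range 4, #(diagonalMidpoints E (rotate4^[k] q)) ≤ Fintype.card V := by
  classical
  obtain ⟨a, b, c, d⟩ := q
  obtain ⟨hab, hbc, hcd, hda⟩ := mk_mem_closedWalks4.mp hq
  simp only [sum_range_succ, range_zero, sum_empty, zero_add, Function.iterate_succ_apply',
    Function.iterate_zero_apply, rotate4, diagonalMidpoints]
  rw [← card_union_of_disjoint (h3.disjoint_midpoints_of_adj hda),
    ← card_union_of_disjoint (disjoint_union_left.mpr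
      ⟨h3.disjoint_midpoints_swap a c, h3.disjoint_midpoints_of_adj hab⟩),
    ← card_union_of_disjoint (disjoint_union_left.mpr ⟨disjoint_union_left.mpr
      ⟨(h3.disjoint_midpoints_of_adj hcd).symm, h3.disjoint_midpoints_swap b d⟩,
      h3.disjoint_midpoints_of_adj hbc⟩)]
  exact card_le_univ _

lemma sixteen_le_card_mul_sum_inv_card_diagonalMidpoints (h3 : ThreeFree E)
    {q : V × V × V × V} (hq : q ∈ closedWalks4 E) :
    (16 : ℚ) ≤
      Fintype.card V * ∑ k ∈ range 4, (#(diagonalMidpoints E (rotate4^[k] q)) : ℚ)⁻¹ := by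
  have hpos : ∀ k ∈ range 4, (0 : ℚ) < #(diagonalMidpoints E (rotate4^[k] q)) := fun k _ =>
    Nat.cast_pos.mpr (card_diagonalMidpoints_pos (iterate_rotate4_mem_closedWalks4 hq k))
  calc (16 : ℚ) = (#(range 4) : ℚ) ^ 2 := by norm_num
    _ ≤ (∑ k ∈ range 4, (#(diagonalMidpoints E (rotate4^[k] q)) : ℚ)) *
        ∑ k ∈ range 4, (#(diagonalMidpoints E (rotate4^[k] q)) : ℚ)⁻¹ :=
      sq_card_le_sum_mul_sum_inv _ hpos
    _ ≤ _ := by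
      gcongr
      exact_mod_cast h3.sum_card_diagonalMidpoints_le hq

lemma four_mul_card_closedWalks4_le (h3 : ThreeFree E) :
    (4 : ℚ) * #(closedWalks4 E) ≤
      Fintype.card V * ∑ q ∈ closedWalks4 E, (#(diagonalMidpoints E q) : ℚ)⁻¹ := by
  have key := sum_le_sum fun q hq =>
    h3.sixteen_le_card_mul_sum_inv_card_diagonalMidpoints (q := q) hq
  rw [← mul_sum, sum_comm] at key
  simp only [sum_closedWalks4_comp_iterate_rotate4 (fun q => (#(diagonalMidpoints E q) : ℚ)⁻¹),
    sum_const, card_range, nsmul_eq_mul] at key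
  linarith

lemma smul_inv_card_midpoints_le [DecidableEq V] (h3 : ThreeFree E) (a c : V) :
    (#(midpoints E a c) * #(midpoints E c a)) • (#(midpoints E a c) : ℚ)⁻¹ ≤
      if c ≠ a ∧ ¬E c a ∧ ¬E a c then (#(midpoints E c a) : ℚ) else 0 := by
  rcases (midpoints E a c).eq_empty_or_nonempty with hac | hac
  · simp only [hac, card_empty, zero_mul, zero_smul]
    split_ifs <;> positivity
  rcases (midpoints E c a).eq_empty_or_nonempty with hca | hca
  · simp only [hca, card_empty, mul_zero, zero_smul]
    split_ifs <;> positivity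
  rw [if_pos (h3.nonadj_of_midpoints_nonempty hca hac), nsmul_eq_mul, Nat.cast_mul,
    mul_comm, ← mul_assoc, inv_mul_cancel₀ (by exact_mod_cast hac.card_pos.ne'), one_mul]

section Fin

variable {n : ℕ} {E : Fin n → Fin n → Prop} [DecidableRel E]

lemma p3Count_eq (h3 : ThreeFree E) :
    p3Count n E = ∑ u, ∑ v, if u ≠ v ∧ ¬E u v ∧ ¬E v u then #(midpoints E u v) else 0 := by
  simp only [p3Count, card_filter, Fintype.sum_prod_type, h3.inducedP3_iff, ite_and]
  refine sum_congr rfl fun u _ => ?_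
  rw [sum_comm]
  simp only [midpoints, card_filter, ite_and, sum_ite_irrel, sum_const_zero]

lemma sum_inv_card_diagonalMidpoints_le (h3 : ThreeFree E) :
    ∑ q ∈ closedWalks4 E, (#(diagonalMidpoints E q) : ℚ)⁻¹ ≤ p3Count n E :=
  calc ∑ q ∈ closedWalks4 E, (#(diagonalMidpoints E q) : ℚ)⁻¹
      = ∑ a, ∑ c, (#(midpoints E a c) * #(midpoints E c a)) • (#(midpoints E a c) : ℚ)⁻¹ :=
        sum_closedWalks4_eq_sum_card_mul_card fun a c => (#(midpoints E a c) : ℚ)⁻¹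
    _ ≤ ∑ a, ∑ c, if c ≠ a ∧ ¬E c a ∧ ¬E a c then (#(midpoints E c a) : ℚ) else 0 :=
        sum_le_sum fun a _ => sum_le_sum fun c _ => h3.smul_inv_card_midpoints_le a c
    _ = p3Count n E := by
      rw [sum_comm, h3.p3Count_eq]
      push_cast
      rfl

end Fin

end ThreeFree

section Cycles

variable {V : Type*} {E : V → V → Prop}

lemma IsCycle4.rotate {w x y z : V} (h : IsCycle4 E w x y z) : IsCycle4 E x y z w := by
  obtain ⟨hwx, hwy, hwz, hxy, hxz, hyz, ewx, exy, eyz, ezw⟩ := h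
  exact ⟨hxy, hxz, hwx.symm, hyz, hwy.symm, hwz.symm, exy, eyz, ezw, ewx⟩

lemma IsCycle4.exists_start [DecidableEq V] {w x y z v : V} (h : IsCycle4 E w x y z)
    (hv : v ∈ ({w, x, y, z} : Finset V)) :
    ∃ b c d, IsCycle4 E v b c d ∧ ({v, b, c, d} : Finset V) = {w, x, y, z} := by
  simp only [mem_insert, mem_singleton] at hv
  rcases hv with rfl | rfl | rfl | rfl
  · exact ⟨_, _, _, h, rfl⟩
  · exact ⟨_, _, _, h.rotate, by ext; simp; tauto⟩
  · exact ⟨_, _, _, h.rotate.rotate, by ext; simp; tauto⟩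
  · exact ⟨_, _, _, h.rotate.rotate.rotate, by ext; simp; tauto⟩

lemma IsCycle4.mem_closedWalks4 [Fintype V] [DecidableRel E] {a b c d : V}
    (h : IsCycle4 E a b c d) : (a, b, c, d) ∈ closedWalks4 E := by
  obtain ⟨-, -, -, -, -, -, hab, hbc, hcd, hda⟩ := h
  exact mk_mem_closedWalks4.mpr ⟨hab, hbc, hcd, hda⟩

variable [DecidableEq V]

def tailPermutations (q : V × V × V × V) : Finset (V × V × V × V) :=
  match q with
  | (a, b, c, d) =>
    {(a, b, c, d), (a, b, d, c), (a, c, b, d), (a, c, d, b), (a, d, b, c), (a, d, c, b)}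

lemma card_tailPermutations_le (q : V × V × V × V) : #(tailPermutations q) ≤ 6 :=
  card_le_six

lemma mk_mem_tailPermutations {a b c d x y z : V} (hx : x ≠ a) (hy : y ≠ a) (hz : z ≠ a)
    (hxy : x ≠ y) (hxz : x ≠ z) (hyz : y ≠ z) (h : ({a, x, y, z} : Finset V) = {a, b, c, d}) :
    (a, x, y, z) ∈ tailPermutations (a, b, c, d) := by
  have mem : ∀ v ∈ ({a, x, y, z} : Finset V), v ≠ a → v = b ∨ v = c ∨ v = d := by
    intro v hv hva
    simpa [h, hva] using hv
  rcases mem x (by simp) hx with rfl | rfl | rfl <;>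
    rcases mem y (by simp) hy with rfl | rfl | rfl <;>
    rcases mem z (by simp) hz with rfl | rfl | rfl <;>
    simp_all [tailPermutations]

end Cycles

lemma sCount_le_six_mul_card_closedWalks4 {n : ℕ} (E : Fin n → Fin n → Prop) [DecidableRel E] :
    sCount n E ≤ 6 * #(closedWalks4 E) := by
  calc sCount n E ≤ #((closedWalks4 E).biUnion tailPermutations) := card_le_card ?_
    _ ≤ #(closedWalks4 E) * 6 :=
      card_biUnion_le_card_mul _ _ _ fun q _ => card_tailPermutations_le q
    _ = 6 * #(closedWalks4 E) := mul_comm _ _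
  rintro ⟨t₁, t₂, t₃, t₄⟩ ht
  simp only [mem_filter, mem_univ, true_and] at ht
  obtain ⟨h₁₂, h₁₃, h₁₄, h₂₃, h₂₄, h₃₄, w, x, y, z, hcyc, hset⟩ := ht
  obtain ⟨b, c, d, hcyc', hset'⟩ := hcyc.exists_start (v := t₁) (by simp [hset])
  exact mem_biUnion.mpr ⟨(t₁, b, c, d), hcyc'.mem_closedWalks4,
    mk_mem_tailPermutations h₁₂.symm h₁₃.symm h₁₄.symm h₂₃ h₂₄ h₃₄ (hset.symm.trans hset'.symm)⟩

theorem squares_le_paths (n : ℕ) (E : Fin n → Fin n → Prop) [DecidableRel E]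
    (h3 : ThreeFree E) :
    (sCount n E : ℚ) ≤ 3 * (n : ℚ) / 2 * (p3Count n E : ℚ) := by
  have hS : (sCount n E : ℚ) ≤ 6 * #(closedWalks4 E) := by
    exact_mod_cast sCount_le_six_mul_card_closedWalks4 E
  have hQ : (4 : ℚ) * #(closedWalks4 E) ≤ n * p3Count n E := by
    simpa using h3.four_mul_card_closedWalks4_le.trans
      (mul_le_mul_of_nonneg_left h3.sum_inv_card_diagonalMidpoints_le (Nat.cast_nonneg _))
  linarith
end

section
/- If G is a 3-free digraph on n vertices, then 24·P_4(G) = n^4 + 3S − |N|, where P_4(G) is the number of directed 4-vertex paths, S is the number of ordered 4-tuples of distinct vertices forming a directed 4-cycle in order (so S is 24 times the number of 4-cycles), and N is the set of ordered 4-tuples of vertices whose vertex set carries no directed 4-vertex path. -/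
/-!
Double count the pairs `(q, p)` of 4-tuples in which `q` is a directed path and `p` has the same
vertex set. A path has distinct vertices, so it pairs with exactly 24 tuples `p`: there are
`24 * P₄` pairs. On the other side, 3-freeness forces the number of paths on the vertex set of
`p` to be 4 if it spans a 4-cycle, 1 if it spans a path but no 4-cycle, and 0 otherwise, that is
`1 + 3 * [p ∈ S] - [p ∈ N]`; summing over all `n ^ 4` tuples gives the identity.
-/

open Finset

section TupleSets

variable {V : Type*} [DecidableEq V]

def tupleSet (p : V × V × V × V) : Finset V := {p.1, p.2.1, p.2.2.1, p.2.2.2}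

lemma card_tupleSet_eq_four_iff {p : V × V × V × V} :
    #(tupleSet p) = 4 ↔ p.1 ≠ p.2.1 ∧ p.1 ≠ p.2.2.1 ∧ p.1 ≠ p.2.2.2 ∧ p.2.1 ≠ p.2.2.1 ∧
      p.2.1 ≠ p.2.2.2 ∧ p.2.2.1 ≠ p.2.2.2 := by
  unfold tupleSet
  grind [card_eq_four]

lemma tupleSet_map {W : Type*} [DecidableEq W] (f : V ↪ W) (p : V × V × V × V) :
    tupleSet (f.prodMap (f.prodMap (f.prodMap f)) p) = (tupleSet p).map f := by
  simp [tupleSet]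

lemma card_filter_tupleSet_eq_of_card_eq_four [Fintype V] {s : Finset V} (hs : #s = 4) :
    #{p : V × V × V × V | tupleSet p = s} = 24 := by
  let F : Fin 4 ↪ V :=
    (s.equivFinOfCardEq hs).symm.toEmbedding.trans (Function.Embedding.subtype _)
  have hF : univ.map F = s := by
    rw [← map_map, map_univ_equiv, univ_map_subtype, filter_univ_mem]
  have hrange : ∀ v ∈ s, ∃ i, F i = v := fun v hv => by simpa [← hF] using hv
  have hfilter : ({p : V × V × V × V | tupleSet p = s} : Finset _) =
      ({r : Fin 4 × Fin 4 × Fin 4 × Fin 4 | tupleSet r = univ} : Finset _).map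
        (F.prodMap (F.prodMap (F.prodMap F))) := by
    ext p
    simp only [mem_map, mem_filter, mem_univ, true_and]
    constructor
    · obtain ⟨p₁, p₂, p₃, p₄⟩ := p
      intro hp
      have hmem : ∀ v ∈ tupleSet (p₁, p₂, p₃, p₄), ∃ i, F i = v := hp ▸ hrange
      obtain ⟨i₁, rfl⟩ := hmem p₁ (by simp [tupleSet])
      obtain ⟨i₂, rfl⟩ := hmem p₂ (by simp [tupleSet])
      obtain ⟨i₃, rfl⟩ := hmem p₃ (by simp [tupleSet])
      obtain ⟨i₄, rfl⟩ := hmem p₄ (by simp [tupleSet])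
      refine ⟨(i₁, i₂, i₃, i₄), map_injective F ?_, rfl⟩
      rw [← tupleSet_map, hF]
      exact hp
    · rintro ⟨r, hr, rfl⟩
      rw [tupleSet_map, hr, hF]
  rw [hfilter, card_map]
  decide

end TupleSets

section Digraph

variable {V : Type*} {E : V → V → Prop} {a b c d : V}

lemma IsCycle4.rotate_s12 (h : IsCycle4 E a b c d) : IsCycle4 E b c d a := by
  obtain ⟨hab, hac, had, hbc, hbd, hcd, eab, ebc, ecd, eda⟩ := h
  exact ⟨hbc, hbd, hab.symm, hcd, hac.symm, had.symm, ebc, ecd, eda, eab⟩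

lemma IsCycle4.isPath4 (h : IsCycle4 E a b c d) : IsPath4 E a b c d :=
  let ⟨hab, hac, had, hbc, hbd, hcd, eab, ebc, ecd, _⟩ := h
  ⟨hab, hac, had, hbc, hbd, hcd, eab, ebc, ecd⟩

lemma IsPath4.isCycle4 (h : IsPath4 E a b c d) (eda : E d a) : IsCycle4 E a b c d :=
  let ⟨hab, hac, had, hbc, hbd, hcd, eab, ebc, ecd⟩ := h
  ⟨hab, hac, had, hbc, hbd, hcd, eab, ebc, ecd, eda⟩

variable [DecidableEq V]

/- Besides the three path edges, 3-freeness leaves only `a → c`, `b → d`, `a → d` and `d → a`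
possible among `a, b, c, d`, and `d → a` excludes the other three. So either every edge points
forward along the path, which makes it the only Hamiltonian path, or the four vertices span
exactly the cycle `a → b → c → d → a`. -/
lemma ThreeFree.eq_or_rotate_of_isPath4 (h3 : ThreeFree E) {w x y z : V}
    (hp : IsPath4 E a b c d) (hq : IsPath4 E w x y z)
    (hs : ({w, x, y, z} : Finset V) = {a, b, c, d}) :
    (w, x, y, z) = (a, b, c, d) ∨
      E d a ∧ ((w, x, y, z) = (b, c, d, a) ∨ (w, x, y, z) = (c, d, a, b) ∨
        (w, x, y, z) = (d, a, b, c)) := by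
  obtain ⟨hab, hac, had, hbc, hbd, hcd, eab, ebc, ecd⟩ := hp
  obtain ⟨hwx, hwy, hwz, hxy, hxz, hyz, ewx, exy, eyz⟩ := hq
  obtain ⟨-, no2, no3⟩ := h3
  have nba : ¬ E b a := fun h => no2 a b ⟨eab, h⟩
  have ncb : ¬ E c b := fun h => no2 b c ⟨ebc, h⟩
  have ndc : ¬ E d c := fun h => no2 c d ⟨ecd, h⟩
  have nca : ¬ E c a := fun h => no3 a b c ⟨eab, ebc, h⟩
  have ndb : ¬ E d b := fun h => no3 b c d ⟨ebc, ecd, h⟩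
  have nad : E d a → ¬ E a d := fun h h' => no2 a d ⟨h', h⟩
  have nac : E d a → ¬ E a c := fun h h' => no3 a c d ⟨h', ecd, h⟩
  have nbd : E d a → ¬ E b d := fun h h' => no3 a b d ⟨eab, h', h⟩
  have hmem : ∀ v ∈ ({w, x, y, z} : Finset V), v = a ∨ v = b ∨ v = c ∨ v = d := by
    intro v hv; simpa [hs] using hv
  rcases hmem w (by simp) with rfl | rfl | rfl | rfl <;>
    rcases hmem x (by simp) with rfl | rfl | rfl | rfl <;> (try contradiction) <;>
    rcases hmem y (by simp) with rfl | rfl | rfl | rfl <;> (try contradiction) <;>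
    rcases hmem z (by simp) with rfl | rfl | rfl | rfl <;> (try contradiction) <;>
    simp_all

end Digraph

section PathsOnVertexSet

variable {V : Type*} [DecidableEq V] (E : V → V → Prop)

def CarriesPath4 (s : Finset V) : Prop :=
  ∃ w x y z : V, IsPath4 E w x y z ∧ ({w, x, y, z} : Finset V) = s

def CarriesCycle4 (s : Finset V) : Prop :=
  ∃ w x y z : V, IsCycle4 E w x y z ∧ ({w, x, y, z} : Finset V) = s

variable {E}

lemma CarriesCycle4.carriesPath4 {s : Finset V} (h : CarriesCycle4 E s) : CarriesPath4 E s :=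
  let ⟨w, x, y, z, hc, hs⟩ := h
  ⟨w, x, y, z, hc.isPath4, hs⟩

lemma CarriesCycle4.card_eq_four {s : Finset V} (h : CarriesCycle4 E s) : #s = 4 := by
  obtain ⟨w, x, y, z, ⟨hwx, hwy, hwz, hxy, hxz, hyz, -⟩, rfl⟩ := h
  exact card_tupleSet_eq_four_iff (p := (w, x, y, z)).2 ⟨hwx, hwy, hwz, hxy, hxz, hyz⟩

variable (E) [Fintype V] [DecidableRel E]

instance (s : Finset V) : Decidable (CarriesPath4 E s) := by
  unfold CarriesPath4; infer_instance

instance (s : Finset V) : Decidable (CarriesCycle4 E s) := by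
  unfold CarriesCycle4; infer_instance

def pathsOn (s : Finset V) : Finset (V × V × V × V) :=
  {q | IsPath4 E q.1 q.2.1 q.2.2.1 q.2.2.2 ∧ tupleSet q = s}

variable {E}

lemma pathsOn_of_isCycle4 (h3 : ThreeFree E) {a b c d : V} (hc : IsCycle4 E a b c d) :
    pathsOn E {a, b, c, d} = {(a, b, c, d), (b, c, d, a), (c, d, a, b), (d, a, b, c)} := by
  ext ⟨w, x, y, z⟩
  simp only [pathsOn, mem_filter, mem_univ, true_and, mem_insert, mem_singleton]
  constructor
  · rintro ⟨hq, hs⟩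
    exact (h3.eq_or_rotate_of_isPath4 hc.isPath4 hq hs).imp_right And.right
  · have hrot {v₁ v₂ v₃ v₄ : V} : ({v₂, v₃, v₄, v₁} : Finset V) = {v₁, v₂, v₃, v₄} := by
      ext; simp only [mem_insert, mem_singleton]; tauto
    rintro (h | h | h | h) <;> simp only [Prod.mk.injEq] at h <;>
      obtain ⟨rfl, rfl, rfl, rfl⟩ := h
    · exact ⟨hc.isPath4, rfl⟩
    · exact ⟨hc.rotate_s12.isPath4, hrot⟩
    · exact ⟨hc.rotate_s12.rotate_s12.isPath4, hrot.trans hrot⟩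
    · exact ⟨hc.rotate_s12.rotate_s12.rotate_s12.isPath4, hrot.trans (hrot.trans hrot)⟩

lemma pathsOn_of_isPath4 (h3 : ThreeFree E) {a b c d : V} (hp : IsPath4 E a b c d)
    (hda : ¬ E d a) : pathsOn E {a, b, c, d} = {(a, b, c, d)} := by
  ext q
  simp only [pathsOn, mem_filter, mem_univ, true_and, mem_singleton]
  constructor
  · rintro ⟨hq, hs⟩
    simpa [hda] using h3.eq_or_rotate_of_isPath4 hp hq hs
  · rintro rfl
    exact ⟨hp, rfl⟩

lemma card_pathsOn (h3 : ThreeFree E) (s : Finset V) :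
    #(pathsOn E s) = if CarriesCycle4 E s then 4 else if CarriesPath4 E s then 1 else 0 := by
  split_ifs with hc hp
  · obtain ⟨a, b, c, d, hc, rfl⟩ := hc
    rw [pathsOn_of_isCycle4 h3 hc]
    obtain ⟨hab, hac, had, hbc, hbd, hcd, -⟩ := hc
    simp [hab, hac, had, hbc, hbd, hcd, hab.symm, hac.symm, had.symm, hbc.symm, hbd.symm,
      hcd.symm]
  · obtain ⟨a, b, c, d, hp, rfl⟩ := hp
    have hda : ¬ E d a := fun hda => hc ⟨a, b, c, d, hp.isCycle4 hda, rfl⟩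
    rw [pathsOn_of_isPath4 h3 hp hda, card_singleton]
  · rw [card_eq_zero, pathsOn, filter_eq_empty_iff]
    rintro ⟨w, x, y, z⟩ - ⟨hq, rfl⟩
    exact hp ⟨w, x, y, z, hq, rfl⟩

lemma sum_card_pathsOn_tupleSet :
    ∑ p : V × V × V × V, #(pathsOn E (tupleSet p)) =
      24 * #{q : V × V × V × V | IsPath4 E q.1 q.2.1 q.2.2.1 q.2.2.2} := by
  calc ∑ p : V × V × V × V, #(pathsOn E (tupleSet p))
      = ∑ q ∈ {q : V × V × V × V | IsPath4 E q.1 q.2.1 q.2.2.1 q.2.2.2},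
          #{p : V × V × V × V | tupleSet q = tupleSet p} := by
        simp only [pathsOn, ← filter_filter]
        exact sum_card_bipartiteAbove_eq_sum_card_bipartiteBelow _
    _ = ∑ q ∈ {q : V × V × V × V | IsPath4 E q.1 q.2.1 q.2.2.1 q.2.2.2}, 24 := by
        refine sum_congr rfl fun q hq => ?_
        obtain ⟨hwx, hwy, hwz, hxy, hxz, hyz, -⟩ := (mem_filter.1 hq).2
        rw [← card_filter_tupleSet_eq_of_card_eq_four
          (card_tupleSet_eq_four_iff.2 ⟨hwx, hwy, hwz, hxy, hxz, hyz⟩)]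
        simp only [eq_comm]
    _ = 24 * #{q : V × V × V × V | IsPath4 E q.1 q.2.1 q.2.2.1 q.2.2.2} := by
        rw [sum_const, smul_eq_mul, mul_comm]

end PathsOnVertexSet

lemma sCount_eq (n : ℕ) (E : Fin n → Fin n → Prop) [DecidableRel E] :
    sCount n E = #{p : Fin n × Fin n × Fin n × Fin n | CarriesCycle4 E (tupleSet p)} := by
  refine congrArg card (filter_congr fun p _ => ⟨fun h => h.2.2.2.2.2.2, fun h => ?_⟩)
  obtain ⟨h₁, h₂, h₃, h₄, h₅, h₆⟩ := card_tupleSet_eq_four_iff.1 h.card_eq_four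
  exact ⟨h₁, h₂, h₃, h₄, h₅, h₆, h⟩

lemma nCount_eq (n : ℕ) (E : Fin n → Fin n → Prop) [DecidableRel E] :
    nCount n E = #{p : Fin n × Fin n × Fin n × Fin n | ¬ CarriesPath4 E (tupleSet p)} :=
  congrArg card (filter_congr fun _ _ => Iff.rfl)

theorem p4_identity (n : ℕ) (E : Fin n → Fin n → Prop) [DecidableRel E]
    (h3 : ThreeFree E) :
    (24 * p4Count n E : ℤ) = (n : ℤ) ^ 4 + 3 * (sCount n E : ℤ) - (nCount n E : ℤ) := by
  have hcount (s : Finset (Fin n)) : (#(pathsOn E s) : ℤ) =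
      1 + 3 * (if CarriesCycle4 E s then 1 else 0) - (if ¬ CarriesPath4 E s then 1 else 0) := by
    rw [card_pathsOn h3]
    by_cases hc : CarriesCycle4 E s
    · simp [hc, hc.carriesPath4]
    · by_cases hp : CarriesPath4 E s <;> simp [hc, hp]
  calc (24 * p4Count n E : ℤ) = ∑ p, (#(pathsOn E (tupleSet p)) : ℤ) := by
        exact_mod_cast (sum_card_pathsOn_tupleSet (E := E)).symm
    _ = ∑ p : Fin n × Fin n × Fin n × Fin n,
          (1 + 3 * (if CarriesCycle4 E (tupleSet p) then 1 else 0) -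
            (if ¬ CarriesPath4 E (tupleSet p) then 1 else 0)) :=
        sum_congr rfl fun p _ => hcount _
    _ = (n : ℤ) ^ 4 + 3 * (sCount n E : ℤ) - (nCount n E : ℤ) := by
        simp only [sum_add_distrib, sum_sub_distrib, ← mul_sum, sum_boole, sCount_eq, nCount_eq]
        simp [card_univ, pow_succ, mul_assoc]
end

section
/- If G is a 3-free digraph on n vertices in which every vertex has out-degree at least d, then the number of directed 4-vertex walks (equivalently, directed 4-vertex paths, since G is 3-free) is at least d^3·n; consequently, by the bound P_4(G) ≤ (4/75)n^4, some vertex of G has out-degree at most (4/75)^{1/3}·n. -/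
/-- Out-degree of a vertex. -/
def outdeg (n : ℕ) (E : Fin n → Fin n → Prop) [DecidableRel E] (v : Fin n) : ℕ :=
  (Finset.univ.filter fun w => E v w).card

/-!
Choosing `d` out-neighbours at every step gives `d ^ 3 * n` distinct walks, all of them paths in a
3-free digraph. For the upper bound, a 4-set of vertices carries at most one 4-path, unless all
its 4-paths close up to 4-cycles, in which case there are at most four of them (one per starting
vertex). Hence `4 P₄ ≤ 4 (n choose 4) + 3 Z`, where `Z` counts 4-cycles `w → x → y → z → w` as
tuples. Joining the diagonals `(w, y)` and `(x, z)` of every 4-cycle gives a graph on the ordered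
non-adjacent pairs which, by 3-freeness, is triangle-free; Mantel's theorem gives `4 Z ≤ q ^ 2`
for the number `q ≤ n ^ 2 - 2 n d` of such pairs. So `48 d ^ 3 n ≤ 2 n ^ 4 + 9 (n ^ 2 - 2 n d) ^ 2`,
which fails once `d > (4 / 75) ^ (1 / 3) n`; apply it to the minimum out-degree.
-/

theorem isCycle4_iff {V : Type*} {E : V → V → Prop} {w x y z : V} :
    IsCycle4 E w x y z ↔ IsPath4 E w x y z ∧ E z w := by
  simp only [IsCycle4, IsPath4, and_assoc]

namespace ThreeFree

variable {V : Type*} {E : V → V → Prop}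

theorem isPath4_of_adj (h3 : ThreeFree E) {w x y z : V} (hwx : E w x) (hxy : E x y)
    (hyz : E y z) : IsPath4 E w x y z := by
  obtain ⟨hirr, hasymm, htri⟩ := h3
  refine ⟨?_, ?_, ?_, ?_, ?_, ?_, hwx, hxy, hyz⟩ <;> rintro rfl
  exacts [hirr _ hwx, hasymm _ _ ⟨hwx, hxy⟩, htri _ _ _ ⟨hwx, hxy, hyz⟩, hirr _ hxy,
    hasymm _ _ ⟨hxy, hyz⟩, hirr _ hyz]

theorem eq_of_isPath4_of_not_adj [DecidableEq V] (h3 : ThreeFree E) {a b c d a' b' c' d' : V}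
    (hP : IsPath4 E a b c d) (hda : ¬E d a) (hQ : IsPath4 E a' b' c' d')
    (hT : ({a', b', c', d'} : Finset V) = {a, b, c, d}) : (a', b', c', d') = (a, b, c, d) := by
  obtain ⟨hirr, hasymm, htri⟩ := h3
  obtain ⟨-, -, -, -, -, -, hab, hbc, hcd⟩ := hP
  obtain ⟨-, -, -, -, -, -, hab', hbc', hcd'⟩ := hQ
  simp only [Finset.ext_iff, Finset.mem_insert, Finset.mem_singleton] at hT
  have hsource : ∀ t, t = a ∨ t = b ∨ t = c ∨ t = d → ¬E t a := by
    rintro t (rfl | rfl | rfl | rfl) h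
    exacts [hirr _ h, hasymm _ _ ⟨hab, h⟩, htri _ _ _ ⟨hab, hbc, h⟩, hda h]
  have hsink : ∀ t, t = a ∨ t = b ∨ t = c ∨ t = d → ¬E d t := by
    rintro t (rfl | rfl | rfl | rfl) h
    exacts [hda h, htri _ _ _ ⟨hbc, hcd, h⟩, hasymm _ _ ⟨hcd, h⟩, hirr _ h]
  have := hT a; have := hT b; have := hT c; have := hT d
  have := hT a'; have := hT b'; have := hT c'; have := hT d'
  -- hence `a' = a` and `d' = d`, and `¬E c b` puts `b'` and `c'` in order
  simp only [Prod.mk.injEq]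
  grind

theorem eq_of_isCycle4_of_isPath4 [DecidableEq V] (h3 : ThreeFree E) {a b c d b' c' d' : V}
    (hC : IsCycle4 E a b c d) (hQ : IsPath4 E a b' c' d')
    (hT : ({a, b', c', d'} : Finset V) = {a, b, c, d}) : (b', c', d') = (b, c, d) := by
  obtain ⟨hirr, hasymm, htri⟩ := h3
  obtain ⟨-, -, -, -, -, -, hab, hbc, hcd, hda⟩ := hC
  obtain ⟨-, -, -, -, -, -, hab', hbc', hcd'⟩ := hQ
  simp only [Finset.ext_iff, Finset.mem_insert, Finset.mem_singleton] at hT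
  -- A 4-cycle has no chords, so each of its vertices has only one out-neighbour among the four.
  have := hT b'; have := hT c'; have := hT d'; have := hT d
  simp only [Prod.mk.injEq]
  grind

end ThreeFree

open Finset

section Paths

variable {V : Type*} [DecidableEq V] {E : V → V → Prop}

def vertexSet (p : V × V × V × V) : Finset V := {p.1, p.2.1, p.2.2.1, p.2.2.2}

theorem card_vertexSet_of_isPath4 {p : V × V × V × V}
    (hp : IsPath4 E p.1 p.2.1 p.2.2.1 p.2.2.2) : #(vertexSet p) = 4 := by
  obtain ⟨h12, h13, h14, h23, h24, h34, -⟩ := hp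
  simp [vertexSet, card_insert_of_notMem, *]

variable [Fintype V] [DecidableRel E]

variable (E) in
def paths4 : Finset (V × V × V × V) := {p | IsPath4 E p.1 p.2.1 p.2.2.1 p.2.2.2}

variable (E) in
def cycles4 : Finset (V × V × V × V) := {p | IsCycle4 E p.1 p.2.1 p.2.2.1 p.2.2.2}

theorem ThreeFree.four_mul_card_paths4_fiber_le (h3 : ThreeFree E) {T : Finset V}
    (hT : #T ≤ 4) :
    4 * #{p ∈ paths4 E | vertexSet p = T} ≤ 4 + 3 * #{p ∈ cycles4 E | vertexSet p = T} := by
  by_cases hopen : ∃ p ∈ paths4 E, vertexSet p = T ∧ ¬E p.2.2.2 p.1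
  · obtain ⟨⟨a, b, c, d⟩, hp, rfl, hda⟩ := hopen
    have hunique : ∀ q ∈ {q ∈ paths4 E | vertexSet q = vertexSet (a, b, c, d)},
        q = (a, b, c, d) := by
      rintro ⟨a', b', c', d'⟩ hq
      simp only [paths4, mem_filter, mem_univ, true_and] at hp hq
      exact h3.eq_of_isPath4_of_not_adj hp hda hq.1 hq.2
    have : #{q ∈ paths4 E | vertexSet q = vertexSet (a, b, c, d)} ≤ 1 :=
      card_le_one.2 fun q hq r hr => (hunique q hq).trans (hunique r hr).symm
    omega
  · push Not at hopen
    have hclosed : ∀ p ∈ {p ∈ paths4 E | vertexSet p = T},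
        p ∈ {p ∈ cycles4 E | vertexSet p = T} := by
      intro p hp
      simp only [paths4, cycles4, mem_filter, mem_univ, true_and, isCycle4_iff] at hp ⊢
      exact ⟨⟨hp.1, hopen p (by simpa [paths4] using hp.1) hp.2⟩, hp.2⟩
    have hle : #{p ∈ paths4 E | vertexSet p = T} ≤ #T := by
      refine card_le_card_of_injOn Prod.fst (fun p hp => ?_) ?_
      · rw [← (mem_filter.1 hp).2]
        simp [vertexSet]
      · rintro ⟨a, b, c, d⟩ hp ⟨a', b', c', d'⟩ hq (rfl : a = a')
        have hp' := hclosed _ hp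
        simp only [coe_filter, paths4, cycles4, mem_filter, mem_univ, true_and,
          Set.mem_ofPred_eq] at hp hp' hq
        exact congrArg (Prod.mk a)
          (h3.eq_of_isCycle4_of_isPath4 hp'.1 hq.1 (hq.2.trans hp.2.symm)).symm
    have := card_le_card hclosed
    omega

theorem ThreeFree.four_mul_card_paths4_le (h3 : ThreeFree E) :
    4 * #(paths4 E) ≤ 4 * (Fintype.card V).choose 4 + 3 * #(cycles4 E) := by
  have hpaths : ∀ p ∈ paths4 E, vertexSet p ∈ powersetCard 4 univ := fun p hp =>
    mem_powersetCard.2 ⟨subset_univ _, card_vertexSet_of_isPath4 (mem_filter.1 hp).2⟩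
  have hcycles : ∀ p ∈ cycles4 E, vertexSet p ∈ powersetCard 4 univ := fun p hp =>
    mem_powersetCard.2 ⟨subset_univ _,
      card_vertexSet_of_isPath4 (isCycle4_iff.1 (mem_filter.1 hp).2).1⟩
  rw [card_eq_sum_card_fiberwise hpaths, card_eq_sum_card_fiberwise hcycles, mul_sum, mul_sum]
  calc ∑ T ∈ powersetCard 4 univ, 4 * #{p ∈ paths4 E | vertexSet p = T}
      ≤ ∑ T ∈ powersetCard 4 univ, (4 + 3 * #{p ∈ cycles4 E | vertexSet p = T}) :=
        sum_le_sum fun T hT => h3.four_mul_card_paths4_fiber_le (mem_powersetCard.1 hT).2.le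
    _ = _ := by
        rw [sum_add_distrib, sum_const, card_powersetCard, card_univ, smul_eq_mul, mul_comm]

theorem ThreeFree.pow_three_mul_card_le_card_paths4 (h3 : ThreeFree E) {d : ℕ}
    (hd : ∀ v, d ≤ #{w | E v w}) : d ^ 3 * Fintype.card V ≤ #(paths4 E) := by
  have hnbrs : ∀ v, ∃ f : Fin d ↪ V, ∀ i, E v (f i) := fun v => by
    obtain ⟨f⟩ := Function.Embedding.nonempty_of_card_le (α := Fin d) (β := {w // E v w})
      (by simpa [Fintype.card_subtype] using hd v)
    exact ⟨f.trans (Function.Embedding.subtype _), fun i => (f i).2⟩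
  choose g hg using hnbrs
  calc d ^ 3 * Fintype.card V = #(univ : Finset (V × Fin d × Fin d × Fin d)) := by
        simp only [card_univ, Fintype.card_prod, Fintype.card_fin]; ring
    _ ≤ #(paths4 E) := by
      refine card_le_card_of_injOn
        (fun p => (p.1, g p.1 p.2.1, g (g p.1 p.2.1) p.2.2.1, g (g (g p.1 p.2.1) p.2.2.1) p.2.2.2))
        (fun p _ => ?_) ?_
      · simpa [paths4] using h3.isPath4_of_adj (hg _ _) (hg _ _) (hg _ _)
      · rintro ⟨v, i, j, k⟩ - ⟨v', i', j', k'⟩ - heq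
        simp only [Prod.mk.injEq] at heq
        obtain ⟨rfl, hi, hj, hk⟩ := heq
        obtain rfl := (g v).injective hi
        obtain rfl := (g _).injective hj
        obtain rfl := (g _).injective hk
        rfl

end Paths

namespace SimpleGraph

variable {W : Type*} [Fintype W] {G : SimpleGraph W} [DecidableRel G.Adj]

theorem CliqueFree.four_mul_card_edgeFinset_le (hG : G.CliqueFree 3) :
    4 * #G.edgeFinset ≤ Fintype.card W ^ 2 := by
  have := hG.card_edgeFinset_le (r := 2)
  simp only [Nat.choose_eq_zero_of_lt (Nat.mod_lt _ two_pos), add_zero] at this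
  omega

theorem CliqueFree.four_mul_card_edgeFinset_le_of_support_subset [DecidableEq W]
    (hG : G.CliqueFree 3) {s : Finset W} (hs : G.support ⊆ s) : 4 * #G.edgeFinset ≤ #s ^ 2 := by
  rw [← card_edgeFinset_induce_of_support_subset hs]
  convert (hG.comap ⟨Copy.induce G s⟩).four_mul_card_edgeFinset_le using 3 <;> simp

end SimpleGraph

section Diagonals

variable {V : Type*} {E : V → V → Prop}

-- Ordered pairs, so that a 4-cycle, as a tuple, is determined by the edge it gives.
variable (E) in
def diagonalGraph : SimpleGraph (V × V) where
  Adj p q := IsCycle4 E p.1 q.1 p.2 q.2 ∨ IsCycle4 E q.1 p.1 q.2 p.2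
  symm := ⟨fun _ _ => Or.symm⟩
  loopless := ⟨fun _ h => h.elim (fun h => h.1 rfl) (fun h => h.1 rfl)⟩

@[simp]
theorem diagonalGraph_adj {p q : V × V} :
    (diagonalGraph E).Adj p q ↔ IsCycle4 E p.1 q.1 p.2 q.2 ∨ IsCycle4 E q.1 p.1 q.2 p.2 :=
  Iff.rfl

theorem ThreeFree.diagonalGraph_cliqueFree (h3 : ThreeFree E) :
    (diagonalGraph E).CliqueFree 3 := by
  classical
  intro s hs
  obtain ⟨⟨u, v⟩, q, r, hpq, hpr, hqr, -⟩ := SimpleGraph.is3Clique_iff.1 hs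
  -- Each neighbour of `(u, v)` has one vertex on a path `u → · → v` and one on a path
  -- `v → · → u`; two such vertices are never adjacent, but `q ~ r` needs a vertex of `q`
  -- adjacent to both vertices of `r`.
  have hchord : ∀ x y, E u x → E x v → E v y → E y u → ¬E x y ∧ ¬E y x :=
    fun x y hux hxv hvy hyu =>
      ⟨fun hxy => h3.2.2 _ _ _ ⟨hxy, hyu, hux⟩, fun hyx => h3.2.2 _ _ _ ⟨hyx, hxv, hvy⟩⟩
  simp only [diagonalGraph_adj, IsCycle4] at hpq hpr hqr
  grind

variable [Fintype V] [DecidableRel E]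

variable (E) in
def arcs : Finset (V × V) := {p | E p.1 p.2}

theorem card_arcs_eq_sum : #(arcs E) = ∑ v, #{w | E v w} := by
  rw [arcs, card_filter, Fintype.sum_prod_type]
  simp_rw [card_filter]

variable [DecidableEq V]

variable (E) in
def nonEdges : Finset (V × V) := {p | p.1 ≠ p.2 ∧ ¬E p.1 p.2 ∧ ¬E p.2 p.1}

theorem ThreeFree.diagonals_mem_nonEdges (h3 : ThreeFree E) {w x y z : V}
    (h : IsCycle4 E w x y z) : (w, y) ∈ nonEdges E ∧ (x, z) ∈ nonEdges E := by
  obtain ⟨-, -, htri⟩ := h3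
  obtain ⟨-, hwy, -, -, hxz, -, hwx, hxy, hyz, hzw⟩ := h
  simp only [nonEdges, mem_filter, mem_univ, true_and]
  exact ⟨⟨hwy, fun h => htri _ _ _ ⟨h, hyz, hzw⟩, fun h => htri _ _ _ ⟨h, hwx, hxy⟩⟩,
    ⟨hxz, fun h => htri _ _ _ ⟨h, hzw, hwx⟩, fun h => htri _ _ _ ⟨h, hxy, hyz⟩⟩⟩

theorem ThreeFree.support_diagonalGraph_subset (h3 : ThreeFree E) :
    (diagonalGraph E).support ⊆ nonEdges E := by
  rintro p ⟨q, h | h⟩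
  exacts [(h3.diagonals_mem_nonEdges h).1, (h3.diagonals_mem_nonEdges h).2]

theorem ThreeFree.four_mul_card_cycles4_le (h3 : ThreeFree E) :
    4 * #(cycles4 E) ≤ #(nonEdges E) ^ 2 := by
  classical
  calc 4 * #(cycles4 E) ≤ 4 * #(diagonalGraph E).edgeFinset := by
        gcongr
        refine card_le_card_of_injOn (fun p => s((p.1, p.2.2.1), (p.2.1, p.2.2.2))) ?_ ?_
        · rintro ⟨w, x, y, z⟩ h
          simp only [coe_filter, cycles4, mem_univ, true_and, Set.mem_ofPred_eq] at h
          simp [h]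
        · rintro ⟨w, x, y, z⟩ h ⟨w', x', y', z'⟩ h' heq
          simp only [coe_filter, cycles4, mem_univ, true_and, Set.mem_ofPred_eq] at h h'
          simp only [Sym2.eq_iff, Prod.mk.injEq] at heq
          rcases heq with ⟨⟨rfl, rfl⟩, rfl, rfl⟩ | ⟨⟨rfl, rfl⟩, rfl, rfl⟩
          · rfl
          · obtain ⟨-, -, -, -, -, -, hwx, -⟩ := h
            obtain ⟨-, -, -, -, -, -, hxw, -⟩ := h'
            exact (h3.2.1 _ _ ⟨hwx, hxw⟩).elim
    _ ≤ #(nonEdges E) ^ 2 :=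
        h3.diagonalGraph_cliqueFree.four_mul_card_edgeFinset_le_of_support_subset
          h3.support_diagonalGraph_subset

theorem card_nonEdges_add_two_mul_card_arcs_le (hE : ∀ u v, E u v → ¬E v u) :
    #(nonEdges E) + 2 * #(arcs E) ≤ Fintype.card V ^ 2 := by
  set R : Finset (V × V) := {p | E p.2 p.1}
  have hswap : #(arcs E) = #R := card_equiv (Equiv.prodComm V V) (by simp [arcs, R])
  have hdisj₁ : Disjoint (nonEdges E) (arcs E) := disjoint_filter.2 fun p _ h => h.2.1
  have hdisj₂ : Disjoint (nonEdges E ∪ arcs E) R := by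
    refine disjoint_left.2 fun p hp hrev => ?_
    simp only [nonEdges, arcs, R, mem_union, mem_filter, mem_univ, true_and] at hp hrev
    exact hp.elim (fun h => h.2.2 hrev) (fun h => hE _ _ h hrev)
  calc #(nonEdges E) + 2 * #(arcs E) = #(nonEdges E ∪ arcs E ∪ R) := by
        rw [card_union_of_disjoint hdisj₂, card_union_of_disjoint hdisj₁, ← hswap]; ring
    _ ≤ Fintype.card V ^ 2 := by simpa [sq] using card_le_univ (nonEdges E ∪ arcs E ∪ R)

end Diagonals

theorem Nat.factorial_mul_choose_le_pow (n k : ℕ) : k.factorial * n.choose k ≤ n ^ k :=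
  descFactorial_eq_factorial_mul_choose n k ▸ descFactorial_le_pow n k

theorem le_cbrt_mul_of_cubic_le {n d q : ℝ} (hn : 0 < n) (hq : 0 ≤ q)
    (hqd : q + 2 * (n * d) ≤ n ^ 2) (h : 48 * (d ^ 3 * n) ≤ 2 * n ^ 4 + 9 * q ^ 2) :
    d ≤ (4 / 75) ^ (1 / 3 : ℝ) * n := by
  set c : ℝ := (4 / 75) ^ (1 / 3 : ℝ)
  have hc0 : 0 ≤ c := by positivity
  have hc3 : c ^ 3 = 4 / 75 := by
    rw [← Real.rpow_natCast, ← Real.rpow_mul (by norm_num)]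
    norm_num
  have hc : 3763 / 10000 < c := lt_of_pow_lt_pow_left₀ 3 hc0 (by rw [hc3]; norm_num)
  by_contra! hlt
  -- `d > c n` gives `48 d ^ 3 n > 2.56 n ^ 4`, while `q < (1 - 2 c) n ^ 2 < 0.2474 n ^ 2`
  -- gives `2 n ^ 4 + 9 q ^ 2 < 2.551 n ^ 4`.
  have hd3 : 4 / 75 * n ^ 3 < d ^ 3 := by
    rw [← hc3, ← mul_pow]
    exact pow_lt_pow_left₀ hlt (by positivity) three_ne_zero
  have hqn : q < 2474 / 10000 * n ^ 2 := by nlinarith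
  have hq2 : q ^ 2 < (2474 / 10000 * n ^ 2) ^ 2 := pow_lt_pow_left₀ hqn hq two_ne_zero
  nlinarith [mul_lt_mul_of_pos_right hd3 hn]

theorem min_outdegree_bound (n : ℕ) (hn : 0 < n)
    (E : Fin n → Fin n → Prop) [DecidableRel E] (h3 : ThreeFree E)
    (d : ℕ) (hd : ∀ v, d ≤ outdeg n E v) :
    d ^ 3 * n ≤ p4Count n E ∧
      ∃ v : Fin n, (outdeg n E v : ℝ) ≤ ((4 : ℝ) / 75) ^ ((1 : ℝ) / 3) * (n : ℝ) := by
  have hwalks : d ^ 3 * n ≤ #(paths4 E) := by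
    simpa using h3.pow_three_mul_card_le_card_paths4 hd
  refine ⟨hwalks, ?_⟩
  have : Nonempty (Fin n) := ⟨⟨0, hn⟩⟩
  obtain ⟨v, -, hv⟩ := exists_min_image univ (outdeg n E) univ_nonempty
  have hmin : ∀ w, outdeg n E v ≤ outdeg n E w := fun w => hv w (mem_univ w)
  have hpaths := h3.pow_three_mul_card_le_card_paths4 hmin
  have hcount := h3.four_mul_card_paths4_le
  have hcycles := h3.four_mul_card_cycles4_le
  have hchoose := Nat.factorial_mul_choose_le_pow n 4
  have hpairs := card_nonEdges_add_two_mul_card_arcs_le fun u v huv hvu => h3.2.1 u v ⟨huv, hvu⟩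
  have harcs : n * outdeg n E v ≤ #(arcs E) := by
    simpa [card_arcs_eq_sum, outdeg] using sum_le_sum fun w (_ : w ∈ univ) => hmin w
  simp only [Fintype.card_fin, Nat.factorial] at hpaths hcount hchoose hpairs
  refine ⟨v, le_cbrt_mul_of_cubic_le (by positivity) (Nat.cast_nonneg #(nonEdges E)) ?_ ?_⟩
  · exact_mod_cast (by omega : #(nonEdges E) + 2 * (n * outdeg n E v) ≤ n ^ 2)
  · exact_mod_cast
      (by linarith : 48 * (outdeg n E v ^ 3 * n) ≤ 2 * n ^ 4 + 9 * #(nonEdges E) ^ 2)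
end

section
/- Let G be a 2-free circular interval digraph on n vertices, given by a cyclic vertex ordering v_1,...,v_n such that for each i the out-neighbors of v_i are v_{i+1},...,v_{i+a_i} and the in-neighbors are v_{i−b_i},...,v_{i−1} (indices mod n). If X is a set of edges of G all of maximum length β_G, then G \ X is also a 2-free circular interval digraph. -/
/-- `E` is a circular interval digraph with respect to the standard circular order of
`Fin n`: whenever `u, v, w` are distinct and in clockwise order (i.e. `v` lies strictly
between `u` and `w` clockwise) and `u → w` is an edge, then `u → v` and `v → w` are edges. -/
def CircInterval (n : ℕ) (E : Fin n → Fin n → Prop) : Prop :=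
  ∀ u v w : Fin n, u ≠ v → v ≠ w → u ≠ w →
    cdist n u v < cdist n u w → E u w → E u v ∧ E v w

/-! Removing only longest edges never removes one of the two strictly shorter edges `u → v`,
`v → w` that the interval property demands for an edge `u → w`, and deleting edges cannot
create loops or 2-cycles. -/

lemma cdist_eq (n : ℕ) (u v : Fin n) :
    cdist n u v = if (u : ℕ) ≤ v then (v : ℕ) - u else (v : ℕ) + n - u := by
  have hu := u.isLt
  have hv := v.isLt
  unfold cdist
  split
  · rw [Nat.mod_eq_sub_mod (by omega), Nat.mod_eq_of_lt (by omega)]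
    omega
  · rw [Nat.mod_eq_of_lt (by omega)]

lemma cdist_lt_of_cdist_lt {n : ℕ} {u v w : Fin n} (huv : u ≠ v)
    (h : cdist n u v < cdist n u w) : cdist n v w < cdist n u w := by
  have hu := u.isLt
  have hv := v.isLt
  have hw := w.isLt
  have huv' : (u : ℕ) ≠ v := Fin.val_ne_of_ne huv
  simp only [cdist_eq] at h ⊢
  split at h <;> split at h <;> split <;> omega

lemma TwoFree.mono {V : Type*} {E F : V → V → Prop} (hE : TwoFree E)
    (hFE : ∀ u v, F u v → E u v) : TwoFree F :=
  ⟨fun v hv => hE.1 v (hFE v v hv), fun u v h => hE.2 u v ⟨hFE u v h.1, hFE v u h.2⟩⟩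

lemma CircInterval.remove_longest {n : ℕ} {E : Fin n → Fin n → Prop} (hE : CircInterval n E)
    {X : Set (Fin n × Fin n)}
    (hX : ∀ p ∈ X, ∀ a b : Fin n, E a b → cdist n a b ≤ cdist n p.1 p.2) :
    CircInterval n (fun u v => E u v ∧ (u, v) ∉ X) := by
  intro u v w huv hvw huw hlt ⟨huw_edge, _⟩
  have not_mem_of_shorter {a b : Fin n} (hab : cdist n a b < cdist n u w) : (a, b) ∉ X :=
    fun hmem => lt_irrefl _ (hab.trans_le (hX _ hmem u w huw_edge))
  obtain ⟨huv_edge, hvw_edge⟩ := hE u v w huv hvw huw hlt huw_edge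
  exact ⟨⟨huv_edge, not_mem_of_shorter hlt⟩,
    ⟨hvw_edge, not_mem_of_shorter (cdist_lt_of_cdist_lt huv hlt)⟩⟩

theorem remove_longest_edges (n : ℕ) (E : Fin n → Fin n → Prop)
    (h2 : TwoFree E) (hCI : CircInterval n E)
    (X : Set (Fin n × Fin n))
    (hX : ∀ p ∈ X, E p.1 p.2 ∧ ∀ a b : Fin n, E a b → cdist n a b ≤ cdist n p.1 p.2) :
    TwoFree (fun u v => E u v ∧ (u, v) ∉ X) ∧
      CircInterval n (fun u v => E u v ∧ (u, v) ∉ X) :=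
  ⟨h2.mono fun _ _ h => h.1, hCI.remove_longest fun p hp => (hX p hp).2⟩
end
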